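/- Let e ≥ 0 and d be integers with p^e ≥ d ≥ 0, and define φ*(t) = I₄ + t^{p^e}·E₁₄ for t ∈ k (the 4×4 identity matrix with the additional entry t^{p^e} in position (1,4)) and ω*(u) = diag(u^{p^e}, u^{d}, u^{−d}, u^{−p^e}) for u ∈ kˣ. Suppose φ⁻ : k → SL(4,k) satisfies: φ⁻(s+s') = φ⁻(s)·φ⁻(s') for all s,s' ∈ k; every matrix entry of φ⁻(s) is a polynomial function of s; φ⁻(s) is lower triangular for every s ∈ k; and φ*(t)·φ⁻(s) = φ⁻(s/(1+t·s)) · ω*(1+t·s) · φ*(t/(1+t·s)) for all t,s ∈ k with 1+t·s ≠ 0. Then d = 0 and φ⁻(s) = I₄ + s^{p^e}·E₄₁ for every s ∈ k (the identity matrix with the additional entry s^{p^e} in position (4,1)). -/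

import Mathlib

open Matrix

/-- The unipotent one-parameter subgroup `φ*(t) = I₄ + t^{p^e}·E₁₄` of form (XXIV). -/
noncomputable def phiStarXXIV (k : Type*) [Field k] (q : ℕ) (t : k) :
    Matrix (Fin 4) (Fin 4) k :=
  1 + Matrix.single 0 3 (t ^ q)

/-- The cocharacter `ω*(u) = diag(u^{p^e}, u^{d}, u^{−d}, u^{−p^e})` of form (XXIV). -/
noncomputable def omegaStarXXIV (k : Type*) [Field k] (q : ℕ) (d : ℤ) (u : kˣ) :
    Matrix (Fin 4) (Fin 4) k :=
  Matrix.diagonal ![(u : k) ^ (q : ℤ), (u : k) ^ d, (u : k) ^ (-d), (u : k) ^ (-(q : ℤ))]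

/-! Read entrywise, the relation pins down `φ⁻` one entry at a time (indices are 0-based, so
the paper's `E₁₄` is `single 0 3`). The diagonal entries of an additive lower-triangular
`φ⁻` are additive characters `k → k`, and in characteristic `p` these are trivial:
`ψ(s)^p = ψ(p • s) = 1`, and `x ↦ x^p` is injective. With a unit diagonal, entry `(0,0)` of
the relation reads `1 + t^q φ⁻₃₀(s) = (1 + ts)^q = 1 + t^q s^q`; entry `(1,1)` reads
`u^d = 1` for every unit `u`, so `d = 0` as `k` is infinite; entries `(0,j)` and `(i,3)`
kill the rest of the last row and of the first column; and entry `(2,1)` makes `φ⁻₂₁`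
constant on `kˣ`, which an additive function can only be if it vanishes. -/

theorem AddChar.apply_eq_one_of_charP {A R : Type*} [Ring A] [CommRing R] [IsReduced R]
    (p : ℕ) [Fact p.Prime] [CharP A p] [CharP R p] (ψ : AddChar A R) (a : A) : ψ a = 1 := by
  have hp : (ψ a - 1) ^ p = 0 := by
    rw [sub_pow_char, one_pow, ← AddChar.map_nsmul_eq_pow, nsmul_eq_mul, CharP.cast_eq_zero,
      zero_mul, AddChar.map_zero_eq_one, sub_self]
  exact sub_eq_zero.mp (IsReduced.eq_zero _ ⟨p, hp⟩)

theorem Matrix.IsLowerTriangular.mul_apply_self {m R : Type*} [Fintype m] [LinearOrder m]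
    [NonUnitalNonAssocSemiring R] {M N : Matrix m m R} (hM : M.IsLowerTriangular)
    (hN : N.IsLowerTriangular) (i : m) : (M * N) i i = M i i * N i i := by
  rw [mul_apply, Finset.sum_eq_single i (fun j _ hji => ?_) (by simp)]
  rcases hji.lt_or_gt with h | h
  · rw [hN h, mul_zero]
  · rw [hM h, zero_mul]

theorem Matrix.SpecialLinearGroup.apply_self_eq_one_of_isLowerTriangular {k n : Type*} [Field k]
    [Fintype n] [DecidableEq n] [LinearOrder n] (p : ℕ) [Fact p.Prime] [CharP k p]
    {φ : k → SpecialLinearGroup n k} (hadd : ∀ s s', φ (s + s') = φ s * φ s')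
    (htri : ∀ s, (φ s : Matrix n n k).IsLowerTriangular) (s : k) (i : n) :
    (φ s : Matrix n n k) i i = 1 := by
  have h0 : φ 0 = 1 := by simpa using hadd 0 0
  let ψ : AddChar k k :=
    { toFun := fun s => (φ s : Matrix n n k) i i
      map_zero_eq_one' := by simp [h0]
      map_add_eq_mul' := fun a b => by
        simpa only [hadd, SpecialLinearGroup.coe_mul] using (htri a).mul_apply_self (htri b) i }
  exact ψ.apply_eq_one_of_charP p s

theorem Int.eq_zero_of_forall_zpow_eq_one {K : Type*} [Field K] [Infinite K] {n : ℤ}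
    (h : ∀ u : Kˣ, (u : K) ^ n = 1) : n = 0 := by
  classical
  by_contra hn
  have hroots : ∀ u : Kˣ, (u : K) ^ n.natAbs = 1 := fun u => by
    have : u ^ n = 1 := Units.ext (by simpa using h u)
    simpa using congrArg Units.val (pow_natAbs_eq_one.mpr this)
  refine (Set.finite_singleton (0 : K)).infinite_compl
    ((Polynomial.nthRoots n.natAbs (1 : K)).toFinset.finite_toSet.subset fun v (hv : v ≠ 0) => ?_)
  simpa [Polynomial.mem_nthRoots (Int.natAbs_pos.mpr hn)] using hroots (Units.mk0 v hv)

theorem exists_ne_zero_one_add_mul_ne_zero {k : Type*} [Field k] [Infinite k] (s : k) :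
    ∃ t : k, t ≠ 0 ∧ 1 + t * s ≠ 0 := by
  classical
  obtain ⟨t, ht⟩ := Infinite.exists_notMem_finset ({0, -s⁻¹} : Finset k)
  simp only [Finset.mem_insert, Finset.mem_singleton, not_or] at ht
  refine ⟨t, ht.1, fun h => ht.2 ?_⟩
  have hs : s ≠ 0 := by rintro rfl; simp at h
  field_simp
  linear_combination h

section BruhatRelation

variable {k : Type*} [Field k]

theorem phiStarXXIV_mul_apply (q : ℕ) (t : k) (M : Matrix (Fin 4) (Fin 4) k) (i j : Fin 4) :
    (phiStarXXIV k q t * M) i j = M i j + if i = 0 then t ^ q * M 3 j else 0 := by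
  fin_cases i <;> simp [phiStarXXIV, add_mul, mul_apply, Fin.sum_univ_four, single]

theorem mul_omegaStarXXIV_mul_phiStarXXIV_apply (q : ℕ) (d : ℤ) (u : kˣ) (t : k)
    (N : Matrix (Fin 4) (Fin 4) k) (i j : Fin 4) :
    (N * omegaStarXXIV k q d u * phiStarXXIV k q t) i j =
      N i j * ![(u : k) ^ (q : ℤ), (u : k) ^ d, (u : k) ^ (-d), (u : k) ^ (-(q : ℤ))] j +
        if j = 3 then t ^ q * (N i 0 * (u : k) ^ (q : ℤ)) else 0 := by
  fin_cases j <;>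
    (simp [phiStarXXIV, omegaStarXXIV, mul_add, mul_apply, Fin.sum_univ_four, single]; try ring)

def BruhatRelXXIV (q : ℕ) (d : ℤ) (A : k → Matrix (Fin 4) (Fin 4) k) : Prop :=
  ∀ (t s : k) (h : 1 + t * s ≠ 0),
    phiStarXXIV k q t * A s =
      A (s / (1 + t * s)) * omegaStarXXIV k q d (Units.mk0 (1 + t * s) h) *
        phiStarXXIV k q (t / (1 + t * s))

variable {q : ℕ} {d : ℤ} {A : k → Matrix (Fin 4) (Fin 4) k}

theorem BruhatRelXXIV.apply (hA : BruhatRelXXIV q d A) {t s : k} (h : 1 + t * s ≠ 0)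
    (i j : Fin 4) :
    A s i j + (if i = 0 then t ^ q * A s 3 j else 0) =
      A (s / (1 + t * s)) i j * ![(1 + t * s) ^ (q : ℤ), (1 + t * s) ^ d, (1 + t * s) ^ (-d),
          (1 + t * s) ^ (-(q : ℤ))] j +
        if j = 3 then (t / (1 + t * s)) ^ q * (A (s / (1 + t * s)) i 0 * (1 + t * s) ^ q)
        else 0 := by
  simpa [phiStarXXIV_mul_apply, mul_omegaStarXXIV_mul_phiStarXXIV_apply] using
    congrFun (congrFun (hA t s h) i) j

theorem BruhatRelXXIV.apply_three_zero_eq_pow [Infinite k] {p e : ℕ} [Fact p.Prime] [CharP k p]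
    (hA : BruhatRelXXIV (p ^ e) d A) (hdiag : ∀ s i, A s i i = 1) (s : k) :
    A s 3 0 = s ^ p ^ e := by
  obtain ⟨t, ht, hts⟩ := exists_ne_zero_one_add_mul_ne_zero s
  have h := hA.apply hts 0 0
  simp only [↓reduceIte, Fin.reduceEq, hdiag, Matrix.cons_val_zero, zpow_natCast,
    one_mul, add_zero, add_pow_char_pow, one_pow, mul_pow] at h
  exact mul_left_cancel₀ (pow_ne_zero _ ht) (add_left_cancel h)

theorem BruhatRelXXIV.apply_three_eq_zero [Infinite k] (hA : BruhatRelXXIV q d A)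
    (htri : ∀ s, (A s).IsLowerTriangular) {j : Fin 4} (hj0 : j ≠ 0) (hj3 : j ≠ 3) (s : k) :
    A s 3 j = 0 := by
  obtain ⟨t, ht, hts⟩ := exists_ne_zero_one_add_mul_ne_zero s
  have h := hA.apply hts 0 j
  have hzero : ∀ s, A s 0 j = 0 := fun s => htri s (Fin.pos_iff_ne_zero.mpr hj0)
  simp only [↓reduceIte, hj3, hzero, zero_mul, zero_add, add_zero] at h
  exact (mul_eq_zero.mp h).resolve_left (pow_ne_zero _ ht)

theorem BruhatRelXXIV.zpow_eq_one (hA : BruhatRelXXIV q d A) (hdiag : ∀ s i, A s i i = 1)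
    (u : kˣ) : (u : k) ^ d = 1 := by
  have hu : 1 + ((u : k) - 1) * 1 = u := by ring
  have h := hA.apply (hu ▸ u.ne_zero) 1 1
  simp only [Fin.reduceEq, ↓reduceIte, add_zero, hdiag, one_mul, Matrix.cons_val_one,
    Matrix.cons_val_zero, hu] at h
  exact h.symm

theorem BruhatRelXXIV.apply_zero_eq_zero [Infinite k] (hA : BruhatRelXXIV q d A)
    (htri : ∀ s, (A s).IsLowerTriangular) {i : Fin 4} (hi0 : i ≠ 0) (hi3 : i ≠ 3) (r : k) :
    A r i 0 = 0 := by
  obtain ⟨t, ht, htr⟩ := exists_ne_zero_one_add_mul_ne_zero (-r)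
  have hc : 1 - t * r ≠ 0 := by rwa [mul_neg, ← sub_eq_add_neg] at htr
  have hu : 1 + t * (r / (1 - t * r)) = (1 - t * r)⁻¹ := by field_simp; ring
  have hus : 1 + t * (r / (1 - t * r)) ≠ 0 := by rw [hu]; exact inv_ne_zero hc
  have hs : r / (1 - t * r) / (1 + t * (r / (1 - t * r))) = r := by
    rw [hu, div_inv_eq_mul, div_mul_cancel₀ _ hc]
  have h := hA.apply hus i 3
  have hzero : ∀ s, A s i 3 = 0 := fun s =>
    htri s (show i < 3 from lt_of_le_of_ne (Fin.le_last i) hi3)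
  simp only [hi0, ↓reduceIte, hs, hzero, zero_mul, zero_add] at h
  simpa [ht, hus] using h.symm

theorem BruhatRelXXIV.apply_two_one_eq_zero [Infinite k] (hA : BruhatRelXXIV q 0 A)
    (hadd : ∀ s s', A (s + s') = A s * A s') (htri : ∀ s, (A s).IsLowerTriangular)
    (hdiag : ∀ s i, A s i i = 1) (r : k) : A r 2 1 = 0 := by
  have hmap_add : ∀ s s', A (s + s') 2 1 = A s 2 1 + A s' 2 1 := fun s s' => by
    have h01 : A s' 0 1 = 0 := htri s' (show (0 : Fin 4) < 1 by decide)
    have h23 : A s 2 3 = 0 := htri s (show (2 : Fin 4) < 3 by decide)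
    simp [hadd, mul_apply, Fin.sum_univ_four, h01, h23, hdiag, add_comm]
  have hconst : ∀ v : k, v ≠ 0 → A v 2 1 = A 1 2 1 := fun v hv => by
    have hu : 1 + (v⁻¹ - 1) * 1 = v⁻¹ := by ring
    have h := hA.apply (hu ▸ inv_ne_zero hv) 2 1
    simpa [hu] using h.symm
  obtain ⟨t, ht, ht1⟩ := exists_ne_zero_one_add_mul_ne_zero (1 : k)
  have hone : A 1 2 1 = 0 := by
    have h := hmap_add 1 t
    rw [hconst _ (by simpa [add_comm] using ht1), hconst t ht] at h
    simpa using h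
  rcases eq_or_ne r 0 with rfl | hr
  · simpa using hmap_add 0 0
  · rw [hconst r hr, hone]

end BruhatRelation

theorem stmt8_general {k : Type*} [Field k] [IsAlgClosed k] {p : ℕ} [Fact p.Prime] [CharP k p]
    (e : ℕ) (d : ℤ)
    (φm : k → SpecialLinearGroup (Fin 4) k)
    (hadd : ∀ s s' : k, φm (s + s') = φm s * φm s')
    (htri : ∀ (s : k) (i j : Fin 4), i < j → (φm s).1 i j = 0)
    (hrel : ∀ (t s : k) (h : 1 + t * s ≠ 0),
      phiStarXXIV k (p ^ e) t * (φm s).1 =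
        (φm (s / (1 + t * s))).1 *
          omegaStarXXIV k (p ^ e) d (Units.mk0 (1 + t * s) h) *
          phiStarXXIV k (p ^ e) (t / (1 + t * s))) :
    d = 0 ∧ ∀ s : k, (φm s).1 = 1 + Matrix.single 3 0 (s ^ p ^ e) := by
  have hA : BruhatRelXXIV (p ^ e) d fun s => (φm s).1 := hrel
  have hlower : ∀ s, (φm s).1.IsLowerTriangular := fun s _ _ h => htri s _ _ h
  have hdiag := SpecialLinearGroup.apply_self_eq_one_of_isLowerTriangular p hadd hlower
  obtain rfl : d = 0 := Int.eq_zero_of_forall_zpow_eq_one (hA.zpow_eq_one hdiag)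
  have hmul : ∀ s s', (φm (s + s')).1 = (φm s).1 * (φm s').1 := fun s s' => by
    rw [hadd]; rfl
  refine ⟨rfl, fun s => ?_⟩
  ext i j
  fin_cases i <;> fin_cases j <;>
    simp [one_apply, single, hdiag, htri s, hA.apply_three_zero_eq_pow hdiag,
      hA.apply_three_eq_zero hlower, hA.apply_zero_eq_zero hlower,
      hA.apply_two_one_eq_zero hmul hlower hdiag]

/-- **form (XXIV).** If `φ⁻` is an additive lower-triangular one-parameter
subgroup of `SL(4,k)` with polynomial entries satisfying the opposite Bruhat relation
against `φ*`, `ω*` of form (XXIV) (with `p^e ≥ d ≥ 0`), then `d = 0` and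
`φ⁻(s) = I₄ + s^{p^e}·E₄₁`. -/
theorem stmt8 {k : Type*} [Field k] [IsAlgClosed k] {p : ℕ} [Fact p.Prime] [CharP k p]
    (e : ℕ) (d : ℤ) (hd0 : 0 ≤ d) (hd : d ≤ (p : ℤ) ^ e)
    (φm : k → SpecialLinearGroup (Fin 4) k)
    (hadd : ∀ s s' : k, φm (s + s') = φm s * φm s')
    (hpoly : ∀ i j : Fin 4, ∃ P : Polynomial k, ∀ s : k, (φm s).1 i j = P.eval s)
    (htri : ∀ (s : k) (i j : Fin 4), i < j → (φm s).1 i j = 0)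
    (hrel : ∀ (t s : k) (h : 1 + t * s ≠ 0),
      phiStarXXIV k (p ^ e) t * (φm s).1 =
        (φm (s / (1 + t * s))).1 *
          omegaStarXXIV k (p ^ e) d (Units.mk0 (1 + t * s) h) *
          phiStarXXIV k (p ^ e) (t / (1 + t * s))) :
    d = 0 ∧ ∀ s : k, (φm s).1 = 1 + Matrix.single 3 0 (s ^ p ^ e) :=
  stmt8_general e d φm hadd htri hrel
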